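/- Let ℋ be a complex Hilbert space, H a bounded non-negative self-adjoint operator on ℋ, 𝔥 ⊆ ℋ a closed subspace with orthogonal projection P onto 𝔥, and K the compression of H to 𝔥. Let ψ : [0,∞) → ℝ be continuous with |ψ(x)| ≤ 1, ψ(0) = 1 and lim_{x→0+}(1 − ψ(x))/x = 0, and let φ : [0,∞) → ℝ be a continuous Kato function. For τ > 0 define the bounded non-negative self-adjoint operator L(τ) on 𝔥 by L(τ)f = (1/τ) P(I − ψ(τH))f + (1/τ) P(I − φ(τH))f for f ∈ 𝔥, where ψ(τH), φ(τH) are given by the continuous functional calculus. Then I_𝔥 + L(τ) is invertible for every τ > 0 and (I_𝔥 + L(τ))^{-1} f → (I_𝔥 + K)^{-1} f as τ → 0+ for every f ∈ 𝔥. -/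

import Mathlib

open Filter Topology

set_option maxHeartbeats 1000000
set_option synthInstance.maxHeartbeats 400000

/-- **Lemma 2.3** (bounded case). Here the closed subspace `𝔥 ⊆ ℋ` is modelled by a
Hilbert space `𝔥` with a linear isometric embedding `J : 𝔥 → ℋ`; `P = J*` is the
orthogonal projection of `ℋ` onto (the image of) `𝔥`, characterized by
`⟪P g, f⟫ = ⟪g, J f⟫`. For a bounded non-negative self-adjoint `H`, the compression
`K = P H J`, a continuous `ψ` with `|ψ| ≤ 1`, `ψ(0) = 1`, `(1 - ψ(x))/x → 0` as
`x → 0+`, and a continuous Kato function `φ`, the operators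
`L(τ) = τ⁻¹ P(I - ψ(τH)) + τ⁻¹ P(I - φ(τH))` on `𝔥` satisfy: `I + L(τ)` is
invertible for `τ > 0` and `(I + L(τ))⁻¹ → (I + K)⁻¹` strongly as `τ → 0+`. -/
theorem zeno_resolvent_strong_convergence
    {ℋ : Type*} [NormedAddCommGroup ℋ] [InnerProductSpace ℂ ℋ] [CompleteSpace ℋ]
    {𝔥 : Type*} [NormedAddCommGroup 𝔥] [InnerProductSpace ℂ 𝔥] [CompleteSpace 𝔥]
    (J : 𝔥 →ₗᵢ[ℂ] ℋ) (P : ℋ →L[ℂ] 𝔥)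
    (hP : ∀ (g : ℋ) (f : 𝔥), (inner ℂ (P g) f : ℂ) = inner ℂ g (J f))
    (Hop : ℋ →L[ℂ] ℋ) (hsa : IsSelfAdjoint Hop)
    (hpos : ∀ g : ℋ, 0 ≤ (inner ℂ (Hop g) g : ℂ).re)
    (K : 𝔥 →L[ℂ] 𝔥) (hK : ∀ f : 𝔥, K f = P (Hop (J f)))
    (ψ : ℝ → ℝ) (hψc : Continuous ψ)
    (hψb : ∀ x : ℝ, 0 ≤ x → |ψ x| ≤ 1) (hψ0 : ψ 0 = 1)
    (hψd : Tendsto (fun x : ℝ => (1 - ψ x) / x) (𝓝[>] 0) (𝓝 0))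
    (φ : ℝ → ℝ) (hφc : Continuous φ)
    (hφr : ∀ x : ℝ, 0 ≤ x → 0 ≤ φ x ∧ φ x ≤ 1) (hφ0 : φ 0 = 1)
    (hφd : Tendsto (fun s : ℝ => (1 - φ s) / s) (𝓝[>] 0) (𝓝 1))
    (L : ℝ → (𝔥 →L[ℂ] 𝔥))
    (hL : ∀ τ : ℝ, 0 < τ → ∀ f : 𝔥,
      L τ f = (τ⁻¹ : ℝ) •
        (P (J f - cfc (fun x : ℝ => ψ (τ * x)) Hop (J f))
          + P (J f - cfc (fun x : ℝ => φ (τ * x)) Hop (J f)))) :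
    (∀ τ : ℝ, 0 < τ → IsUnit (1 + L τ)) ∧
    ∀ f : 𝔥, Tendsto (fun τ : ℝ => Ring.inverse (1 + L τ) f) (𝓝[>] 0)
      (𝓝 (Ring.inverse (1 + K) f)) := by
  -- Basic facts about Hop
  have hHop : (0 : ℋ →L[ℂ] ℋ) ≤ Hop := by
    rw [ContinuousLinearMap.nonneg_iff_isPositive]
    exact ⟨ContinuousLinearMap.isSelfAdjoint_iff_isSymmetric.mp hsa, fun x => hpos x⟩
  have hspec0 : ∀ x ∈ spectrum ℝ Hop, 0 ≤ x := fun x hx =>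
    spectrum_nonneg_of_nonneg hHop hx
  set M : ℝ := ‖Hop‖ * ‖(1 : ℋ →L[ℂ] ℋ)‖ with hMdef
  have hM0 : 0 ≤ M := mul_nonneg (norm_nonneg _) (norm_nonneg _)
  have hspecM : ∀ x ∈ spectrum ℝ Hop, x ≤ M := fun x hx =>
    (le_abs_self x).trans (by simpa using spectrum.norm_le_norm_mul_of_mem hx)
  -- a positive operator has nonneg real quadratic form
  have hinner : ∀ (B : ℋ →L[ℂ] ℋ), 0 ≤ B → ∀ g : ℋ,
      ∃ r : ℝ, 0 ≤ r ∧ (inner ℂ (B g) g : ℂ) = (r : ℂ) := by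
    intro B hB g
    rw [ContinuousLinearMap.nonneg_iff_isPositive] at hB
    refine ⟨(inner ℂ (B g) g : ℂ).re, ((ContinuousLinearMap.isPositive_iff_complex B).mp hB g).2, ?_⟩
    exact ((ContinuousLinearMap.isPositive_iff_complex B).mp hB g).1.symm
  -- 1 - cfc θ Hop is positive if θ ≤ 1 on the spectrum
  have honesub : ∀ (θ : ℝ → ℝ), Continuous θ →
      (1 : ℋ →L[ℂ] ℋ) - cfc θ Hop = cfc (fun x : ℝ => 1 - θ x) Hop := by
    intro θ hθ
    rw [cfc_sub _ _ Hop (by fun_prop) (by fun_prop), cfc_const_one ℝ Hop]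
  have hBpos : ∀ (θ : ℝ → ℝ), Continuous θ → (∀ x ∈ spectrum ℝ Hop, θ x ≤ 1) →
      (0 : ℋ →L[ℂ] ℋ) ≤ 1 - cfc θ Hop := by
    intro θ hθ hb
    rw [honesub θ hθ]
    exact cfc_nonneg (fun x hx => by linarith [hb x hx])
  -- nonneg real quadratic form transferred to 𝔥 via J, P
  have transfer : ∀ (B : ℋ →L[ℂ] ℋ), 0 ≤ B → ∀ f : 𝔥,
      ∃ r : ℝ, 0 ≤ r ∧ (inner ℂ (P (B (J f))) f : ℂ) = (r : ℂ) := by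
    intro B hB f
    obtain ⟨r, hr, hre⟩ := hinner B hB (J f)
    exact ⟨r, hr, by rw [hP]; exact hre⟩
  -- positivity of K
  have hKpos : (0 : 𝔥 →L[ℂ] 𝔥) ≤ K := by
    rw [ContinuousLinearMap.nonneg_iff_isPositive, ContinuousLinearMap.isPositive_iff_complex]
    intro f
    obtain ⟨r, hr, hre⟩ := transfer Hop hHop f
    rw [hK f, hre]
    simp [hr]
  -- positivity of L τ
  have hLpos : ∀ τ : ℝ, 0 < τ → (0 : 𝔥 →L[ℂ] 𝔥) ≤ L τ := by
    intro τ hτ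
    have hψ1 : ∀ x ∈ spectrum ℝ Hop, ψ (τ * x) ≤ 1 := fun x hx =>
      (abs_le.mp (hψb _ (mul_nonneg hτ.le (hspec0 x hx)))).2
    have hφ1 : ∀ x ∈ spectrum ℝ Hop, φ (τ * x) ≤ 1 := fun x hx =>
      (hφr _ (mul_nonneg hτ.le (hspec0 x hx))).2
    rw [ContinuousLinearMap.nonneg_iff_isPositive, ContinuousLinearMap.isPositive_iff_complex]
    intro f
    obtain ⟨r1, hr1, hre1⟩ := transfer _ (hBpos _ (by fun_prop) hψ1) f
    obtain ⟨r2, hr2, hre2⟩ := transfer _ (hBpos _ (by fun_prop) hφ1) f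
    have ha : J f - cfc (fun x : ℝ => ψ (τ * x)) Hop (J f)
        = ((1 : ℋ →L[ℂ] ℋ) - cfc (fun x : ℝ => ψ (τ * x)) Hop) (J f) := by simp
    have hb : J f - cfc (fun x : ℝ => φ (τ * x)) Hop (J f)
        = ((1 : ℋ →L[ℂ] ℋ) - cfc (fun x : ℝ => φ (τ * x)) Hop) (J f) := by simp
    have key : (inner ℂ (L τ f) f : ℂ) = ((τ⁻¹ * (r1 + r2) : ℝ) : ℂ) := by
      rw [hL τ hτ f, ha, hb, ← Complex.coe_smul, inner_smul_left, inner_add_left,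
        hre1, hre2]
      push_cast [map_inv₀, Complex.conj_ofReal]
      ring
    rw [key]
    refine ⟨by simp, by simp; positivity⟩
  -- invertibility of 1 + positive operator
  have hunit : ∀ (T : 𝔥 →L[ℂ] 𝔥), 0 ≤ T → IsUnit (1 + T) := by
    intro T hT
    have h : (-1 : ℝ) ∉ spectrum ℝ T := fun h => by
      linarith [spectrum_nonneg_of_nonneg hT h]
    rw [spectrum.notMem_iff] at h
    have e : (algebraMap ℝ (𝔥 →L[ℂ] 𝔥)) (-1) - T = -(1 + T) := by
      rw [map_neg, map_one]; abel
    rw [e, IsUnit.neg_iff] at h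
    exact h
  refine ⟨fun τ hτ => hunit _ (hLpos τ hτ), ?_⟩
  -- the difference L τ - K as a cfc applied through P and J
  have hDiff : ∀ τ : ℝ, 0 < τ → ∀ f : 𝔥, L τ f - K f
      = P ((cfc (fun x : ℝ => τ⁻¹ * ((1 - ψ (τ*x)) + (1 - φ (τ*x))) - x) Hop) (J f)) := by
    intro τ hτ f
    have hD : cfc (fun x : ℝ => τ⁻¹ * ((1 - ψ (τ*x)) + (1 - φ (τ*x))) - x) Hop
        = τ⁻¹ • ((1 - cfc (fun x : ℝ => ψ (τ*x)) Hop)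
            + (1 - cfc (fun x : ℝ => φ (τ*x)) Hop)) - Hop := by
      rw [cfc_sub _ _ Hop (by fun_prop) (by fun_prop),
        cfc_const_mul τ⁻¹ (fun x : ℝ => (1 - ψ (τ*x)) + (1 - φ (τ*x))) Hop (by fun_prop),
        cfc_add (a := Hop) _ _ (by fun_prop) (by fun_prop),
        cfc_sub _ _ Hop (by fun_prop) (by fun_prop), cfc_sub _ _ Hop (by fun_prop) (by fun_prop),
        cfc_const_one ℝ Hop, cfc_id' (R := ℝ) Hop]
    rw [hD, hL τ hτ f, hK f]
    simp only [ContinuousLinearMap.sub_apply, ContinuousLinearMap.smul_apply,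
      ContinuousLinearMap.add_apply, ContinuousLinearMap.one_apply, map_sub, map_add,
      ContinuousLinearMap.map_smul_of_tower, smul_add]
  -- operator norm bound for the difference
  have hdiffnorm : ∀ τ : ℝ, 0 < τ → ∀ c : ℝ, 0 ≤ c →
      (∀ x ∈ spectrum ℝ Hop, |τ⁻¹ * ((1 - ψ (τ*x)) + (1 - φ (τ*x))) - x| ≤ c) →
      ‖L τ - K‖ ≤ ‖P‖ * c := by
    intro τ hτ c hc hbound
    have hDn : ‖cfc (fun x : ℝ => τ⁻¹ * ((1 - ψ (τ*x)) + (1 - φ (τ*x))) - x) Hop‖ ≤ c :=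
      norm_cfc_le hc (fun x hx => by simpa using hbound x hx)
    refine ContinuousLinearMap.opNorm_le_bound _ (by positivity) fun f => ?_
    rw [ContinuousLinearMap.sub_apply, hDiff τ hτ f]
    calc ‖P ((cfc (fun x : ℝ => τ⁻¹ * ((1 - ψ (τ*x)) + (1 - φ (τ*x))) - x) Hop) (J f))‖
        ≤ ‖P‖ * ‖(cfc (fun x : ℝ => τ⁻¹ * ((1 - ψ (τ*x)) + (1 - φ (τ*x))) - x) Hop) (J f)‖ :=
          P.le_opNorm _
      _ ≤ ‖P‖ * (c * ‖J f‖) := by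
          refine mul_le_mul_of_nonneg_left ?_ (norm_nonneg P)
          exact (ContinuousLinearMap.le_opNorm _ _).trans
            (mul_le_mul_of_nonneg_right hDn (norm_nonneg _))
      _ = ‖P‖ * c * ‖f‖ := by rw [J.norm_map]; ring
  -- norm convergence L τ → K
  have hLK : Tendsto L (𝓝[>] (0:ℝ)) (𝓝 K) := by
    rw [Metric.tendsto_nhdsWithin_nhds]
    intro ε hε
    have hPM : (0:ℝ) < M + 1 := by linarith
    have hP1 : (0:ℝ) < ‖P‖ + 1 := by positivity
    set ε' : ℝ := ε / ((2 * (M + 1)) * (‖P‖ + 1)) with hε'def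
    have hε' : 0 < ε' := by positivity
    rw [Metric.tendsto_nhdsWithin_nhds] at hψd hφd
    obtain ⟨δ1, hδ1, h1⟩ := hψd ε' hε'
    obtain ⟨δ2, hδ2, h2⟩ := hφd ε' hε'
    refine ⟨min δ1 δ2 / (M + 1), by positivity, ?_⟩
    intro τ hτmem hτd
    have hτ : (0:ℝ) < τ := hτmem
    rw [Real.dist_eq, sub_zero, abs_of_pos hτ] at hτd
    have hτ'' : τ * (M + 1) < min δ1 δ2 := by
      rw [lt_div_iff₀ hPM] at hτd
      exact hτd
    have hbound : ∀ x ∈ spectrum ℝ Hop,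
        |τ⁻¹ * ((1 - ψ (τ*x)) + (1 - φ (τ*x))) - x| ≤ 2 * (M+1) * ε' := by
      intro x hx
      have hx0 := hspec0 x hx
      have hxM := hspecM x hx
      rcases eq_or_lt_of_le hx0 with h0 | h0
      · rw [← h0]
        simp only [mul_zero, hψ0, hφ0, sub_self, add_zero, mul_zero, sub_zero, abs_zero]
        positivity
      · have hs0 : 0 < τ * x := mul_pos hτ h0
        have hsl : τ * x < min δ1 δ2 := lt_of_le_of_lt (by nlinarith) hτ''
        have e1 := h1 (Set.mem_Ioi.mpr hs0)
          (by rw [Real.dist_eq, sub_zero, abs_of_pos hs0]; exact hsl.trans_le (min_le_left _ _))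
        have e2 := h2 (Set.mem_Ioi.mpr hs0)
          (by rw [Real.dist_eq, sub_zero, abs_of_pos hs0]; exact hsl.trans_le (min_le_right _ _))
        rw [Real.dist_eq, sub_zero] at e1
        rw [Real.dist_eq] at e2
        have hτne : τ ≠ 0 := ne_of_gt hτ
        have hxne : x ≠ 0 := ne_of_gt h0
        have hsplit : τ⁻¹ * ((1 - ψ (τ*x)) + (1 - φ (τ*x))) - x
            = x * ((1 - ψ (τ*x))/(τ*x)) + x * ((1 - φ (τ*x))/(τ*x) - 1) := by
          field_simp
          ring
        rw [hsplit]
        have hxM' : |x| ≤ M := by rw [abs_of_nonneg hx0]; exact hxM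
        calc |x * ((1 - ψ (τ*x))/(τ*x)) + x * ((1 - φ (τ*x))/(τ*x) - 1)|
            ≤ |x * ((1 - ψ (τ*x))/(τ*x))| + |x * ((1 - φ (τ*x))/(τ*x) - 1)| := abs_add_le _ _
          _ = |x| * |(1 - ψ (τ*x))/(τ*x)| + |x| * |(1 - φ (τ*x))/(τ*x) - 1| := by
              rw [abs_mul, abs_mul]
          _ ≤ M * ε' + M * ε' := by
              refine add_le_add (mul_le_mul hxM' e1.le (abs_nonneg _) hM0)
                (mul_le_mul hxM' e2.le (abs_nonneg _) hM0)
          _ ≤ 2 * (M+1) * ε' := by nlinarith [hε'.le]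
    have hn : ‖L τ - K‖ ≤ ‖P‖ * (2 * (M+1) * ε') :=
      hdiffnorm τ hτ _ (by positivity) hbound
    rw [dist_eq_norm]
    refine lt_of_le_of_lt hn ?_
    have he : 2 * (M+1) * ε' = ε / (‖P‖ + 1) := by
      rw [hε'def]
      field_simp
    rw [he]
    calc ‖P‖ * (ε / (‖P‖ + 1)) < (‖P‖ + 1) * (ε / (‖P‖ + 1)) := by
          refine mul_lt_mul_of_pos_right (by linarith) (by positivity)
      _ = ε := by field_simp
  -- conclude via continuity of Ring.inverse at the unit 1 + K
  have hKunit : IsUnit (1 + K) := hunit K hKpos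
  have htend : Tendsto (fun τ => 1 + L τ) (𝓝[>] (0:ℝ)) (𝓝 (1 + K)) :=
    tendsto_const_nhds.add hLK
  have hinv : Tendsto (fun τ => Ring.inverse (1 + L τ)) (𝓝[>] (0:ℝ))
      (𝓝 (Ring.inverse (1 + K))) := by
    have hc : ContinuousAt Ring.inverse (1 + K) := by
      have := NormedRing.inverse_continuousAt hKunit.unit
      rwa [IsUnit.unit_spec] at this
    exact hc.tendsto.comp htend
  intro f
  exact ((ContinuousLinearMap.apply ℂ 𝔥 f).continuous.tendsto _).comp hinv
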